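/- arXiv:2309.12559 — 3 statements merged into one kernel-verified Lean document; each statement's English description precedes it below -/
import Mathlib

section
/- If a random variable Δ taking values in [0,1] satisfies P(Δ ≥ η) ≤ exp(−2nη²) for all η ≥ 0 (with n ≥ 1 a natural number), then E[exp(2(n−1)Δ²)] ≤ n. -/
/-!
Write `f = exp (2(n-1)Δ²)`. Since `Δ ≥ η` with `η = √(log t / (2(n-1)))` whenever `f > t`, the
Gaussian tail of `Δ` becomes the polynomial tail `P(f > t) ≤ t ^ (-p)` for `t ≥ 1`, with
`p = n / (n-1)`. By the layer-cake formula,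
`E f = ∫₀^∞ P(f > t) dt ≤ 1 + ∫₁^∞ t ^ (-p) dt = 1 + 1 / (p - 1) = n`.
-/

open MeasureTheory Set Real

lemma integral_Ioi_one_rpow_neg {p : ℝ} (hp : 1 < p) :
    ∫ t in Ioi (1 : ℝ), t ^ (-p) = (p - 1)⁻¹ := by
  rw [integral_Ioi_rpow_of_lt (by linarith) one_pos, one_rpow, neg_div, ← div_neg, neg_add',
    neg_neg, one_div]

namespace MeasureTheory

variable {Ω : Type*} [MeasurableSpace Ω] {μ : Measure Ω}

theorem integral_le_one_add_of_measureReal_lt_le_rpow [IsProbabilityMeasure μ] {f : Ω → ℝ}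
    (hf : 0 ≤ᵐ[μ] f) {p : ℝ} (hp : 1 < p)
    (htail : ∀ t, 1 < t → μ.real {ω | t < f ω} ≤ t ^ (-p)) :
    ∫ ω, f ω ∂μ ≤ 1 + (p - 1)⁻¹ := by
  by_cases hint : Integrable f μ
  swap
  · rw [integral_undef hint]
    have : 0 < p - 1 := by linarith
    positivity
  set F : ℝ → ℝ := fun t ↦ μ.real {ω | t < f ω}
  have hF_meas : Measurable F :=
    Antitone.measurable fun s t hst ↦ measureReal_mono fun ω hω ↦ hst.trans_lt hω
  have hF_norm_le_one (t : ℝ) : ‖F t‖ ≤ 1 := by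
    rw [norm_of_nonneg measureReal_nonneg]
    exact measureReal_le_one
  have hrpow : IntegrableOn (fun t : ℝ ↦ t ^ (-p)) (Ioi 1) :=
    integrableOn_Ioi_rpow_of_lt (by linarith) one_pos
  have hF_Ioc : IntegrableOn F (Ioc 0 1) :=
    Measure.integrableOn_of_bounded (by simp) hF_meas.aestronglyMeasurable
      (ae_of_all _ hF_norm_le_one)
  have hF_Ioi : IntegrableOn F (Ioi 1) :=
    hrpow.mono' hF_meas.aestronglyMeasurable.restrict <|
      (ae_restrict_iff' measurableSet_Ioi).2 <| ae_of_all _ fun t ht ↦ by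
        rw [norm_of_nonneg measureReal_nonneg]
        exact htail t ht
  have hbound_Ioc : ∫ t in Ioc (0 : ℝ) 1, F t ≤ 1 := by
    calc ∫ t in Ioc (0 : ℝ) 1, F t ≤ ‖∫ t in Ioc (0 : ℝ) 1, F t‖ := le_norm_self _
      _ ≤ 1 * volume.real (Ioc (0 : ℝ) 1) :=
        norm_setIntegral_le_of_norm_le_const measure_Ioc_lt_top fun t _ ↦ hF_norm_le_one t
      _ = 1 := by simp
  have hbound_Ioi : ∫ t in Ioi (1 : ℝ), F t ≤ (p - 1)⁻¹ := by
    rw [← integral_Ioi_one_rpow_neg hp]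
    exact setIntegral_mono_on hF_Ioi hrpow measurableSet_Ioi htail
  calc ∫ ω, f ω ∂μ = ∫ t in Ioi 0, F t := hint.integral_eq_integral_meas_lt hf
    _ = (∫ t in Ioc 0 1, F t) + ∫ t in Ioi 1, F t := by
      rw [← setIntegral_union (Ioc_disjoint_Ioi le_rfl) measurableSet_Ioi hF_Ioc hF_Ioi,
        Ioc_union_Ioi_eq_Ioi zero_le_one]
    _ ≤ 1 + (p - 1)⁻¹ := add_le_add hbound_Ioc hbound_Ioi

theorem measureReal_lt_exp_mul_sq_le_rpow [IsFiniteMeasure μ] {Δ : Ω → ℝ} (hΔ : ∀ ω, 0 ≤ Δ ω)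
    {a c : ℝ} (hc : 0 < c)
    (htail : ∀ η, 0 ≤ η → μ.real {ω | η ≤ Δ ω} ≤ exp (-a * η ^ 2)) {t : ℝ} (ht : 1 ≤ t) :
    μ.real {ω | t < exp (c * Δ ω ^ 2)} ≤ t ^ (-(a / c)) := by
  have hlog : 0 ≤ log t / c := div_nonneg (log_nonneg ht) hc.le
  set η := √(log t / c)
  have hsub : {ω | t < exp (c * Δ ω ^ 2)} ⊆ {ω | η ≤ Δ ω} := fun ω hω ↦ by
    have : log t < c * Δ ω ^ 2 := by
      simpa using log_lt_log (by linarith) hω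
    show √(log t / c) ≤ Δ ω
    rw [sqrt_le_left (hΔ ω), div_le_iff₀ hc]
    linarith
  calc μ.real {ω | t < exp (c * Δ ω ^ 2)} ≤ μ.real {ω | η ≤ Δ ω} := measureReal_mono hsub
    _ ≤ exp (-a * η ^ 2) := htail η (sqrt_nonneg _)
    _ = t ^ (-(a / c)) := by
      rw [sq_sqrt hlog, rpow_def_of_pos (by linarith)]
      ring_nf

end MeasureTheory

theorem stmt4_general {Ω : Type*} [MeasurableSpace Ω] (μ : Measure Ω) [IsProbabilityMeasure μ]
    (Δ : Ω → ℝ) (h01 : ∀ ω, Δ ω ∈ Set.Icc (0:ℝ) 1)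
    (n : ℕ) (hn : 1 ≤ n)
    (htail : ∀ η : ℝ, 0 ≤ η →
      (μ {ω | η ≤ Δ ω}).toReal ≤ Real.exp (-2 * (n : ℝ) * η ^ 2)) :
    ∫ ω, Real.exp (2 * ((n : ℝ) - 1) * (Δ ω) ^ 2) ∂μ ≤ (n : ℝ) := by
  rcases hn.eq_or_lt with rfl | hn
  · simp
  have hn1 : (0 : ℝ) < n - 1 := by
    rw [sub_pos]
    exact_mod_cast hn
  have hp : 2 * (n : ℝ) / (2 * (n - 1)) - 1 = (n - 1 : ℝ)⁻¹ := by
    field_simp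
    ring
  calc ∫ ω, exp (2 * ((n : ℝ) - 1) * Δ ω ^ 2) ∂μ
      ≤ 1 + (2 * (n : ℝ) / (2 * (n - 1)) - 1)⁻¹ :=
        integral_le_one_add_of_measureReal_lt_le_rpow (ae_of_all _ fun _ ↦ (exp_pos _).le)
          (by rw [← sub_pos, hp]; positivity) fun t ht ↦
            measureReal_lt_exp_mul_sq_le_rpow (fun ω ↦ (h01 ω).1) (by positivity)
              (fun η hη ↦ (htail η hη).trans_eq (by ring_nf)) ht.le
    _ = n := by rw [hp, inv_inv, add_sub_cancel]

/-- If `Δ ∈ [0,1]` satisfies the Hoeffding tail bound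
`P(Δ ≥ η) ≤ exp(−2nη²)` for all `η ≥ 0` (with `n ≥ 1`), then
`E[exp(2(n−1)Δ²)] ≤ n`. -/
theorem stmt4 {Ω : Type*} [MeasurableSpace Ω] (μ : Measure Ω) [IsProbabilityMeasure μ]
    (Δ : Ω → ℝ) (hΔ : Measurable Δ) (h01 : ∀ ω, Δ ω ∈ Set.Icc (0:ℝ) 1)
    (n : ℕ) (hn : 1 ≤ n)
    (htail : ∀ η : ℝ, 0 ≤ η →
      (μ {ω | η ≤ Δ ω}).toReal ≤ Real.exp (-2 * (n : ℝ) * η ^ 2)) :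
    ∫ ω, Real.exp (2 * ((n : ℝ) - 1) * (Δ ω) ^ 2) ∂μ ≤ (n : ℝ) :=
  stmt4_general μ Δ h01 n hn htail
end

section
/- Let C be a binary random variable and Y a binary random variable in a structural causal model where C is exogenous relative to Y (interventional probabilities equal conditional probabilities) and Y is monotonic relative to C (P(Y_{C=c}=y, Y_{C=c̄}≠y)=0 or P(Y_{C=c}≠y, Y_{C=c̄}=y)=0). Then PNS(c,c̄) := P(Y_{C=c}=y | C=c̄, Y≠y)·P(C=c̄, Y≠y) + P(Y_{C=c̄}≠y | C=c, Y=y)·P(C=c, Y=y) equals P(Y=y|C=c) − P(Y=y|C=c̄). -/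
/-!
Consistency identifies the two summands, once the conditional probabilities are multiplied out,
with the parts of the event `{Y_c = y, Y_c̄ ≠ y}` on which `C = c̄` and `C = c`. Monotonicity makes
`{Y_c̄ = y}` almost surely contained in `{Y_c = y}`, so that event has probability
`P(Y_c = y) - P(Y_c̄ = y)`, which exogeneity turns into `P(Y = y | C = c) - P(Y = y | C = c̄)`.
-/

open MeasureTheory

namespace MeasureTheory

variable {Ω : Type*} [MeasurableSpace Ω] {μ : Measure Ω} [IsFiniteMeasure μ] {s t : Set Ω}

/-- This also holds when `t` is null, where the division is junk. -/
theorem measureReal_div_mul_cancel_of_subset (h : s ⊆ t) :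
    μ.real s / μ.real t * μ.real t = μ.real s := by
  rcases eq_or_ne (μ.real t) 0 with ht | ht
  · rw [ht, measureReal_mono_null h ht, zero_div, zero_mul]
  · exact div_mul_cancel₀ _ ht

theorem measureReal_sdiff_eq_sub_of_ae_le (hts : t ≤ᵐ[μ] s) (ht : MeasurableSet t) :
    μ.real (s \ t) = μ.real s - μ.real t := by
  have hinter : μ.real (s ∩ t) = μ.real t := by
    refine measureReal_eq_measureReal_of_null_sdiff Set.inter_subset_right ?_
    rw [Set.inter_comm, Set.sdiff_self_inter, measureReal_def, ae_le_set.1 hts,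
      ENNReal.toReal_zero]
  linarith [measureReal_inter_add_sdiff (μ := μ) (s := s) ht]

end MeasureTheory

/-- `true` encodes `c` and `false` encodes `c̄`; `Yc` and `Ycbar` are `Y_{C=c}` and `Y_{C=c̄}`. -/
theorem stmt9_general {Ω : Type*} [MeasurableSpace Ω] (μ : Measure Ω) [IsProbabilityMeasure μ]
    (C Y Yc Ycbar : Ω → Bool) (y : Bool)
    (hC : Measurable C)
    (hYcbar : Measurable Ycbar)
    (hcons_c : ∀ ω, C ω = true → Y ω = Yc ω)
    (hcons_cbar : ∀ ω, C ω = false → Y ω = Ycbar ω)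
    (hexo_c : (μ {ω | Yc ω = y}).toReal =
      (μ {ω | Y ω = y ∧ C ω = true}).toReal / (μ {ω | C ω = true}).toReal)
    (hexo_cbar : (μ {ω | Ycbar ω = y}).toReal =
      (μ {ω | Y ω = y ∧ C ω = false}).toReal / (μ {ω | C ω = false}).toReal)
    (hmono : μ {ω | Yc ω ≠ y ∧ Ycbar ω = y} = 0) :
    ((μ {ω | Yc ω = y ∧ C ω = false ∧ Y ω ≠ y}).toReal /
        (μ {ω | C ω = false ∧ Y ω ≠ y}).toReal) *
      (μ {ω | C ω = false ∧ Y ω ≠ y}).toReal +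
    ((μ {ω | Ycbar ω ≠ y ∧ C ω = true ∧ Y ω = y}).toReal /
        (μ {ω | C ω = true ∧ Y ω = y}).toReal) *
      (μ {ω | C ω = true ∧ Y ω = y}).toReal
    = (μ {ω | Y ω = y ∧ C ω = true}).toReal / (μ {ω | C ω = true}).toReal -
      (μ {ω | Y ω = y ∧ C ω = false}).toReal / (μ {ω | C ω = false}).toReal := by
  simp only [← measureReal_def] at hexo_c hexo_cbar ⊢
  set Ac := {ω | Yc ω = y}
  set Acbar := {ω | Ycbar ω = y}
  set Tc := {ω | C ω = true}
  have hTc : MeasurableSet Tc := hC (measurableSet_singleton true)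
  have hAcbar : MeasurableSet Acbar := hYcbar (measurableSet_singleton y)
  have hmono_ae : Acbar ≤ᵐ[μ] Ac := by
    rw [ae_le_set, ← hmono]
    congr 1
    ext ω
    exact and_comm
  have benefit_cbar : {ω | Yc ω = y ∧ C ω = false ∧ Y ω ≠ y} = (Ac \ Acbar) \ Tc := by
    ext ω
    rcases hω : C ω <;> simp [Ac, Acbar, Tc, hω, hcons_cbar ω]
  have benefit_c : {ω | Ycbar ω ≠ y ∧ C ω = true ∧ Y ω = y} = (Ac \ Acbar) ∩ Tc := by
    ext ω
    rcases hω : C ω <;> simp [Ac, Acbar, Tc, hω, hcons_c ω, and_comm]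
  rw [measureReal_div_mul_cancel_of_subset fun _ h ↦ h.2,
    measureReal_div_mul_cancel_of_subset fun _ h ↦ h.2, ← hexo_c, ← hexo_cbar, benefit_cbar,
    benefit_c, measureReal_sdiff_add_inter hTc, measureReal_sdiff_eq_sub_of_ae_le hmono_ae hAcbar]

/-- Pearl's PNS identification: with binary cause `C` (value `true`
playing the role of `c` and `false` of `c̄`), outcome `Y`, and counterfactual
outcomes `Yc = Y_{C=c}`, `Ycbar = Y_{C=c̄}`, under consistency, exogeneity
(interventional = conditional probabilities) and monotonicity,
`PNS(c,c̄) = P(Y_{C=c}=y | C=c̄, Y≠y)·P(C=c̄, Y≠y)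
          + P(Y_{C=c̄}≠y | C=c, Y=y)·P(C=c, Y=y)
          = P(Y=y|C=c) − P(Y=y|C=c̄)`. -/
theorem stmt9 {Ω : Type*} [MeasurableSpace Ω] (μ : Measure Ω) [IsProbabilityMeasure μ]
    (C Y Yc Ycbar : Ω → Bool) (y : Bool)
    (hC : Measurable C) (hY : Measurable Y) (hYc : Measurable Yc)
    (hYcbar : Measurable Ycbar)
    (hcons_c : ∀ ω, C ω = true → Y ω = Yc ω)
    (hcons_cbar : ∀ ω, C ω = false → Y ω = Ycbar ω)
    (hpos_c : 0 < (μ {ω | C ω = true}).toReal)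
    (hpos_cbar : 0 < (μ {ω | C ω = false}).toReal)
    (hpos_cy : 0 < (μ {ω | C ω = true ∧ Y ω = y}).toReal)
    (hpos_cbary : 0 < (μ {ω | C ω = false ∧ Y ω ≠ y}).toReal)
    (hexo_c : (μ {ω | Yc ω = y}).toReal =
      (μ {ω | Y ω = y ∧ C ω = true}).toReal / (μ {ω | C ω = true}).toReal)
    (hexo_cbar : (μ {ω | Ycbar ω = y}).toReal =
      (μ {ω | Y ω = y ∧ C ω = false}).toReal / (μ {ω | C ω = false}).toReal)
    (hmono : μ {ω | Yc ω ≠ y ∧ Ycbar ω = y} = 0) :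
    ((μ {ω | Yc ω = y ∧ C ω = false ∧ Y ω ≠ y}).toReal /
        (μ {ω | C ω = false ∧ Y ω ≠ y}).toReal) *
      (μ {ω | C ω = false ∧ Y ω ≠ y}).toReal +
    ((μ {ω | Ycbar ω ≠ y ∧ C ω = true ∧ Y ω = y}).toReal /
        (μ {ω | C ω = true ∧ Y ω = y}).toReal) *
      (μ {ω | C ω = true ∧ Y ω = y}).toReal
    = (μ {ω | Y ω = y ∧ C ω = true}).toReal / (μ {ω | C ω = true}).toReal -
      (μ {ω | Y ω = y ∧ C ω = false}).toReal / (μ {ω | C ω = false}).toReal :=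
  stmt9_general μ C Y Yc Ycbar y hC hYcbar hcons_c hcons_cbar hexo_c hexo_cbar hmono
end

section
/- Under consistency (C=c ⇒ Y=Y_{C=c}) and monotonicity (P(Y_{C=c}≠y ∧ Y_{C=c̄}=y)=0), the PNS of Definition 2.1 satisfies PNS(c,c̄) = P(Y_{C=c}=y) − P(Y_{C=c̄}=y), i.e., PNS equals the difference of interventional probabilities even without exogeneity. -/
/-!
Under consistency, each summand of the PNS is the event `{Y_c = y} \ {Y_c̄ = y}` intersected with
`{C = c̄}` or with `{C = c}`, so the sum is the probability of that event. Monotonicity says that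
`{Y_c̄ = y}` is almost surely contained in `{Y_c = y}`, hence the probability of the difference is
the difference of the probabilities.
-/

open MeasureTheory Set

theorem MeasureTheory.measureReal_sdiff_of_ae_le {α : Type*} [MeasurableSpace α] {μ : Measure α}
    {s t : Set α} (hts : t ≤ᵐ[μ] s) (ht : NullMeasurableSet t μ)
    (hs : μ s ≠ ⊤ := by finiteness) :
    μ.real (s \ t) = μ.real s - μ.real t := by
  have hinter : (s ∩ t : Set α) =ᵐ[μ] t :=
    ae_eq_set.mpr ⟨ae_le_set.mp inter_subset_right.eventuallyLE,
      by rwa [sdiff_inter_self_eq_sdiff, ← ae_le_set]⟩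
  rw [← measureReal_inter_add_sdiff₀ ht hs, measureReal_congr hinter, add_sub_cancel_left]

section Consistency

variable {Ω β : Type*} {C : Ω → Bool} {Y Yc Ycbar : Ω → β} {y : β}

theorem setOf_counterfactual_false_eq_sdiff (hcons : ∀ ω, C ω = false → Y ω = Ycbar ω) :
    {ω | Yc ω = y ∧ C ω = false ∧ Y ω ≠ y}
      = ({ω | Yc ω = y} \ {ω | Ycbar ω = y}) \ {ω | C ω = true} := by
  ext ω
  simp only [mem_ofPred_eq, mem_sdiff, Bool.not_eq_true]
  constructor
  · rintro ⟨hc, hC, hY⟩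
    exact ⟨⟨hc, hcons ω hC ▸ hY⟩, hC⟩
  · rintro ⟨⟨hc, hcbar⟩, hC⟩
    exact ⟨hc, hC, (hcons ω hC).symm ▸ hcbar⟩

theorem setOf_counterfactual_true_eq_inter (hcons : ∀ ω, C ω = true → Y ω = Yc ω) :
    {ω | Ycbar ω ≠ y ∧ C ω = true ∧ Y ω = y}
      = ({ω | Yc ω = y} \ {ω | Ycbar ω = y}) ∩ {ω | C ω = true} := by
  ext ω
  simp only [mem_ofPred_eq, mem_sdiff, mem_inter_iff]
  constructor
  · rintro ⟨hcbar, hC, hY⟩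
    exact ⟨⟨hcons ω hC ▸ hY, hcbar⟩, hC⟩
  · rintro ⟨⟨hc, hcbar⟩, hC⟩
    exact ⟨hcbar, hC, (hcons ω hC).symm ▸ hc⟩

end Consistency

theorem stmt10_general {Ω : Type*} [MeasurableSpace Ω] (μ : Measure Ω) [IsProbabilityMeasure μ]
    (C Y Yc Ycbar : Ω → Bool) (y : Bool)
    (hC : Measurable C)
    (hYcbar : Measurable Ycbar)
    (hcons_c : ∀ ω, C ω = true → Y ω = Yc ω)
    (hcons_cbar : ∀ ω, C ω = false → Y ω = Ycbar ω)
    (hmono : μ {ω | Yc ω ≠ y ∧ Ycbar ω = y} = 0) :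
    (μ {ω | Yc ω = y ∧ C ω = false ∧ Y ω ≠ y}).toReal +
      (μ {ω | Ycbar ω ≠ y ∧ C ω = true ∧ Y ω = y}).toReal
    = (μ {ω | Yc ω = y}).toReal - (μ {ω | Ycbar ω = y}).toReal := by
  have hcbar_ae_le_c : {ω | Ycbar ω = y} ≤ᵐ[μ] {ω | Yc ω = y} := by
    rw [ae_le_set, ← hmono]
    congr 1
    ext ω
    exact and_comm
  simp only [← measureReal_def]
  rw [setOf_counterfactual_false_eq_sdiff hcons_cbar, setOf_counterfactual_true_eq_inter hcons_c,
    measureReal_sdiff_add_inter (measurableSet_eq_fun hC measurable_const),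
    measureReal_sdiff_of_ae_le hcbar_ae_le_c (hYcbar (measurableSet_singleton y)).nullMeasurableSet]

/-- Under consistency and monotonicity (but without exogeneity),
`PNS(c,c̄) = P(Y_{C=c}=y, C=c̄, Y≠y) + P(Y_{C=c̄}≠y, C=c, Y=y)
          = P(Y_{C=c}=y) − P(Y_{C=c̄}=y)`,
the difference of interventional probabilities. Again `true` plays the role of
`c` and `false` of `c̄`. -/
theorem stmt10 {Ω : Type*} [MeasurableSpace Ω] (μ : Measure Ω) [IsProbabilityMeasure μ]
    (C Y Yc Ycbar : Ω → Bool) (y : Bool)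
    (hC : Measurable C) (hY : Measurable Y) (hYc : Measurable Yc)
    (hYcbar : Measurable Ycbar)
    (hcons_c : ∀ ω, C ω = true → Y ω = Yc ω)
    (hcons_cbar : ∀ ω, C ω = false → Y ω = Ycbar ω)
    (hmono : μ {ω | Yc ω ≠ y ∧ Ycbar ω = y} = 0) :
    (μ {ω | Yc ω = y ∧ C ω = false ∧ Y ω ≠ y}).toReal +
      (μ {ω | Ycbar ω ≠ y ∧ C ω = true ∧ Y ω = y}).toReal
    = (μ {ω | Yc ω = y}).toReal - (μ {ω | Ycbar ω = y}).toReal :=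
  stmt10_general μ C Y Yc Ycbar y hC hYcbar hcons_c hcons_cbar hmono
end
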